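/- Let Z[1],...,Z[n],Z[n+1] be exchangeable real-valued random variables. For α ∈ [1/(n+1), 1), let Q_{1-α} be the ⌈(1-α)(n+1)⌉-th smallest value of the multiset {Z[1],...,Z[n], +∞}. Then P(Z[n+1] ≤ Q_{1-α}({Z[i]}_{i=1}^n)) ≥ 1 - α. -/

import Mathlib

open MeasureTheory

/-- The `k`-th smallest element (1-indexed) of a multiset of extended reals. -/
noncomputable def kthSmallestE (s : Multiset EReal) (k : ℕ) : EReal :=
  (s.sort (· ≤ ·)).getD (k - 1) 0

/-- The `(1-α)`-empirical quantile of `n` real values: the `⌈(1-α)(n+1)⌉`-th smallest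
value of the multiset obtained by augmenting them with `+∞` in the extended reals. -/
noncomputable def empQuantile (n : ℕ) (a : Fin n → ℝ) (α : ℝ) : EReal :=
  kthSmallestE ((⊤ : EReal) ::ₘ Multiset.map (fun i => (a i : EReal)) Finset.univ.val)
    ⌈(1 - α) * (n + 1)⌉₊

/-! The test score is at most the empirical quantile exactly when fewer than
`k = ⌈(1 - α)(n + 1)⌉` of the calibration scores lie strictly below it. Among any `n + 1` reals
at least `k` have fewer than `k` of the others strictly below them, and by exchangeability every
index is equally likely to be one of these; so the event has probability at least
`k / (n + 1) ≥ 1 - α`. -/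

open Finset
open scoped ENNReal

theorem le_kthSmallestE_iff {s : Multiset EReal} {k : ℕ} (hk : 0 < k)
    (hks : k ≤ Multiset.card s) (x : EReal) :
    x ≤ kthSmallestE s k ↔ Multiset.card (s.filter (· < x)) < k := by
  set l := s.sort (· ≤ ·)
  have hkl : k - 1 < l.length := by rw [Multiset.length_sort]; omega
  have hmono : Monotone l.get :=
    List.sortedLE_iff_pairwise.mpr (Multiset.pairwise_sort s _)
  have hs : s = Multiset.map l.get univ.val := by
    rw [Fin.univ_val_map, List.ofFn_get, Multiset.sort_eq]
  have hcard : Multiset.card (s.filter (· < x)) = #{i | l.get i < x} := by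
    conv_lhs => rw [hs]
    rw [Multiset.filter_map, Multiset.card_map, ← Finset.filter_val, Finset.card_val]
    rfl
  have hsorted := Tuple.lt_card_lt_iff_apply_lt_of_monotone (j := ⟨k - 1, hkl⟩) (a := x) hmono
  rw [kthSmallestE, List.getD_eq_getElem _ _ hkl, hcard, ← not_lt,
    show l[k - 1] = l.get ⟨k - 1, hkl⟩ from rfl, ← hsorted, not_lt, Fin.val_mk]
  omega

theorem le_empQuantile_iff {n : ℕ} {α : ℝ} (hk : 0 < ⌈(1 - α) * (n + 1)⌉₊)
    (hkn : ⌈(1 - α) * (n + 1)⌉₊ ≤ n + 1) (a : Fin n → ℝ) (x : ℝ) :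
    (x : EReal) ≤ empQuantile n a α ↔ #{i | a i < x} < ⌈(1 - α) * (n + 1)⌉₊ := by
  rw [empQuantile, le_kthSmallestE_iff hk (by simpa using hkn),
    Multiset.filter_cons_of_neg (p := (· < (x : EReal))) _ not_top_lt,
    Multiset.filter_map, Multiset.card_map, ← Finset.filter_val, Finset.card_val]
  simp only [Function.comp_def, EReal.coe_lt_coe_iff]

section Rank

variable {ι α : Type*} [Fintype ι] [LinearOrder α]

def strictRank (z : ι → α) (j : ι) : ℕ := #{i | z i < z j}

theorem strictRank_comp_perm (z : ι → α) (π : Equiv.Perm ι) (j : ι) :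
    strictRank (z ∘ π) j = strictRank z (π j) := by
  simp only [strictRank, card_filter, Function.comp_apply]
  exact Equiv.sum_comp π (fun i => if z i < z (π j) then 1 else 0)

theorem le_card_strictRank_lt (z : ι → α) {k : ℕ} (hk : k ≤ Fintype.card ι) :
    k ≤ #{j | strictRank z j < k} := by
  by_cases hall : ∀ j, strictRank z j < k
  · simpa [hall] using hk
  simp only [not_forall, not_lt] at hall
  -- the smallest index violating the bound has at least `k` strictly smaller indices,
  -- all of which satisfy it
  obtain ⟨j₀, hj₀, hmin⟩ := exists_min_image {j | k ≤ strictRank z j} z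
    (by simpa [filter_nonempty_iff] using hall)
  calc k ≤ strictRank z j₀ := by simpa using hj₀
    _ ≤ #{j | strictRank z j < k} := by
      refine card_le_card fun i hi => ?_
      simp only [mem_filter, mem_univ, true_and] at hi hmin ⊢
      by_contra! h
      exact (hmin i h).not_gt hi

theorem strictRank_last {n : ℕ} (z : Fin (n + 1) → α) :
    strictRank z (Fin.last n) = #{i : Fin n | z i.castSucc < z (Fin.last n)} := by
  simp only [strictRank, card_filter, Fin.sum_univ_castSucc, lt_irrefl, if_false, add_zero]

end Rank

theorem natCast_mul_measure_univ_le_sum_measure {Ω ι : Type*} [MeasurableSpace Ω] [Fintype ι]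
    (μ : Measure Ω) {A : ι → Set Ω} [∀ ω, DecidablePred (ω ∈ A ·)]
    (hA : ∀ i, MeasurableSet (A i)) {k : ℕ} (hk : ∀ ω, k ≤ #{i | ω ∈ A i}) :
    k * μ Set.univ ≤ ∑ i, μ (A i) := by
  have hcount (ω : Ω) : ∑ i, (A i).indicator 1 ω = (#{i | ω ∈ A i} : ℝ≥0∞) := by
    simp only [Set.indicator_apply, Pi.one_apply, sum_boole]
  calc k * μ Set.univ = ∫⁻ _, (k : ℝ≥0∞) ∂μ := (lintegral_const _).symm
    _ ≤ ∫⁻ ω, ∑ i, (A i).indicator 1 ω ∂μ :=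
      lintegral_mono fun ω => by rw [hcount]; exact Nat.cast_le.mpr (hk ω)
    _ = ∑ i, μ (A i) := by
      rw [lintegral_finsetSum _ fun i _ => measurable_one.indicator (hA i)]
      exact sum_congr rfl fun i _ => lintegral_indicator_one (hA i)

theorem measurableSet_strictRank_lt {ι : Type*} [Fintype ι] (j : ι) (k : ℕ) :
    MeasurableSet {z : ι → ℝ | strictRank z j < k} := by
  have hrank : Measurable fun z : ι → ℝ => strictRank z j := by
    simp only [strictRank, card_filter]
    exact Finset.measurable_sum _ fun i _ =>
      Measurable.ite (measurableSet_lt (measurable_pi_apply i) (measurable_pi_apply j))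
        measurable_const measurable_const
  exact hrank (MeasurableSet.of_discrete (s := Set.Iio k))

section Exchangeable

variable {Ω ι : Type*} [MeasurableSpace Ω]

def Exchangeable {β : Type*} [MeasurableSpace β] (μ : Measure Ω) (Z : ι → Ω → β) :
    Prop :=
  ∀ π : Equiv.Perm ι, μ.map (fun ω i => Z (π i) ω) = μ.map (fun ω i => Z i ω)

theorem Exchangeable.measure_preimage_perm {β : Type*} [MeasurableSpace β] {μ : Measure Ω}
    {Z : ι → Ω → β} (hexch : Exchangeable μ Z) (hZ : ∀ i, Measurable (Z i))
    (π : Equiv.Perm ι) {S : Set (ι → β)} (hS : MeasurableSet S) :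
    μ ((fun ω i => Z (π i) ω) ⁻¹' S) = μ ((fun ω i => Z i ω) ⁻¹' S) := by
  rw [← Measure.map_apply (measurable_pi_lambda _ fun i => hZ (π i)) hS,
    ← Measure.map_apply (measurable_pi_lambda _ hZ) hS, hexch π]

theorem Exchangeable.measure_strictRank_lt_eq [Fintype ι] {μ : Measure Ω} {Z : ι → Ω → ℝ}
    (hexch : Exchangeable μ Z) (hZ : ∀ i, Measurable (Z i)) (k : ℕ) (j j' : ι) :
    μ {ω | strictRank (Z · ω) j < k} = μ {ω | strictRank (Z · ω) j' < k} := by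
  classical
  have hpre : {ω | strictRank (Z · ω) j' < k} =
      (fun ω i => Z (Equiv.swap j j' i) ω) ⁻¹' {z | strictRank z j < k} := by
    ext ω
    simp only [Set.mem_ofPred_eq, Set.mem_preimage]
    rw [show (fun i => Z (Equiv.swap j j' i) ω) = (Z · ω) ∘ Equiv.swap j j' from rfl,
      strictRank_comp_perm, Equiv.swap_apply_left]
  rw [hpre, hexch.measure_preimage_perm hZ _ (measurableSet_strictRank_lt j k)]
  rfl

theorem Exchangeable.natCast_le_card_mul_measure_strictRank_lt [Fintype ι] {μ : Measure Ω}
    [IsProbabilityMeasure μ] {Z : ι → Ω → ℝ} (hexch : Exchangeable μ Z)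
    (hZ : ∀ i, Measurable (Z i)) {k : ℕ} (hk : k ≤ Fintype.card ι) (j : ι) :
    (k : ℝ≥0∞) ≤ Fintype.card ι * μ {ω | strictRank (Z · ω) j < k} := by
  have hmeas : ∀ j', MeasurableSet {ω | strictRank (Z · ω) j' < k} := fun j' =>
    measurable_pi_lambda _ hZ (measurableSet_strictRank_lt j' k)
  calc (k : ℝ≥0∞) = k * μ Set.univ := by rw [measure_univ, mul_one]
    _ ≤ ∑ j', μ {ω | strictRank (Z · ω) j' < k} :=
      natCast_mul_measure_univ_le_sum_measure μ hmeas fun ω =>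
        le_card_strictRank_lt (Z · ω) hk
    _ = Fintype.card ι * μ {ω | strictRank (Z · ω) j < k} := by
      simp only [hexch.measure_strictRank_lt_eq hZ k _ j, sum_const, card_univ, nsmul_eq_mul]

end Exchangeable

theorem stmt4 {Ω : Type*} [MeasurableSpace Ω] (μ : Measure Ω) [IsProbabilityMeasure μ]
    (n : ℕ) (Z : Fin (n + 1) → Ω → ℝ) (hZ : ∀ i, Measurable (Z i))
    (hexch : ∀ π : Equiv.Perm (Fin (n + 1)),
      Measure.map (fun ω => fun i => Z (π i) ω) μ =
        Measure.map (fun ω => fun i => Z i ω) μ)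
    (α : ℝ) (hα : α ∈ Set.Ico (1 / (n + 1) : ℝ) 1) :
    ENNReal.ofReal (1 - α) ≤
      μ {ω | (Z (Fin.last n) ω : EReal) ≤
        empQuantile n (fun i : Fin n => Z i.castSucc ω) α} := by
  obtain ⟨hα_ge, hα_lt⟩ := hα
  set k := ⌈(1 - α) * (n + 1)⌉₊ with hk
  have hn : (0 : ℝ) < n + 1 := by positivity
  have hα_nonneg : 0 ≤ α := (by positivity : (0 : ℝ) ≤ 1 / (n + 1)).trans hα_ge
  have hk_pos : 0 < k := Nat.ceil_pos.mpr (mul_pos (by linarith) hn)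
  have hk_le : k ≤ n + 1 := Nat.ceil_le.mpr (by push_cast; nlinarith)
  have hevent : {ω | (Z (Fin.last n) ω : EReal) ≤
      empQuantile n (fun i : Fin n => Z i.castSucc ω) α} =
        {ω | strictRank (Z · ω) (Fin.last n) < k} := by
    ext ω
    simp only [Set.mem_ofPred_eq, le_empQuantile_iff hk_pos hk_le, strictRank_last, ← hk]
  have hrank := (show Exchangeable μ Z from hexch).natCast_le_card_mul_measure_strictRank_lt hZ
    (by simpa using hk_le) (Fin.last n)
  rw [Fintype.card_fin, Nat.cast_succ] at hrank
  rw [hevent, ← ENNReal.mul_le_mul_iff_right (a := (n : ℝ≥0∞) + 1) (by simp) (by simp)]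
  calc ((n : ℝ≥0∞) + 1) * ENNReal.ofReal (1 - α)
      = ENNReal.ofReal ((1 - α) * (n + 1)) := by
        rw [mul_comm, ENNReal.ofReal_mul' hn.le]
        norm_cast
    _ ≤ k := ENNReal.ofReal_le_of_le_toReal (by simpa using Nat.le_ceil _)
    _ ≤ _ := hrank
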